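/- Let f = x1x6 − x2x5 + x3x4 ∈ ℂ[x1,…,x6], the defining equation of the affine cone over the Grassmannian of planes in 4-space. Then the ED data isotropic locus equals the variety itself: DI(f) = V(f); in particular DI(f) equals the dual variety V(f)*. -/

import Mathlib

open MvPolynomial Pointwise

/-- Gradient of a multivariate polynomial at a point. -/
noncomputable def grad {n : ℕ} (f : MvPolynomial (Fin n) ℂ) (x : Fin n → ℂ) : Fin n → ℂ :=
  fun i => eval x (pderiv i f)

/-- Zariski closure: zero locus of the ideal of all polynomials vanishing on `S`. -/
def zclosure {σ : Type} (S : Set (σ → ℂ)) : Set (σ → ℂ) :=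
  {x | ∀ p : MvPolynomial σ ℂ, (∀ s ∈ S, eval s p = 0) → eval x p = 0}

/-- Zero locus `V(f)`. -/
def Vp {n : ℕ} (f : MvPolynomial (Fin n) ℂ) : Set (Fin n → ℂ) := {x | eval x f = 0}

/-- Regular locus. -/
def RegL {n : ℕ} (f : MvPolynomial (Fin n) ℂ) : Set (Fin n → ℂ) :=
  {x | eval x f = 0 ∧ grad f x ≠ 0}

/-- Singular locus. -/
def SingL {n : ℕ} (f : MvPolynomial (Fin n) ℂ) : Set (Fin n → ℂ) :=
  {x | eval x f = 0 ∧ grad f x = 0}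

/-- ED correspondence: Zariski closure of pairs (u,x), x regular, u - x ∈ ℂ·∇f(x),
encoded as functions on `Fin n ⊕ Fin n`. -/
def EDcorr {n : ℕ} (f : MvPolynomial (Fin n) ℂ) : Set ((Fin n ⊕ Fin n) → ℂ) :=
  zclosure {w | ∃ u x : Fin n → ℂ, w = Sum.elim u x ∧ x ∈ RegL f ∧ ∃ t : ℂ, u - x = t • grad f x}

/-- ED data singular locus. -/
def DS {n : ℕ} (f : MvPolynomial (Fin n) ℂ) : Set (Fin n → ℂ) :=
  {u | ∃ x, Sum.elim u x ∈ EDcorr f ∧ x ∈ SingL f}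

/-- Dual variety. -/
def dualV {n : ℕ} (f : MvPolynomial (Fin n) ℂ) : Set (Fin n → ℂ) :=
  zclosure {y | ∃ (t : ℂ) (x : Fin n → ℂ), x ∈ RegL f ∧ y = t • grad f x}

/-- Isotropic quadric. -/
def isoQ (n : ℕ) : Set (Fin n → ℂ) := {x | ∑ i, (x i) ^ 2 = 0}

/-- ED data isotropic locus. -/
def DI {n : ℕ} (f : MvPolynomial (Fin n) ℂ) : Set (Fin n → ℂ) :=
  {u | ∃ x, Sum.elim u x ∈ EDcorr f ∧ x ∈ isoQ n ∩ Vp f}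

/-- Zariski-closed sets. -/
def IsZClosed {σ : Type} (S : Set (σ → ℂ)) : Prop := zclosure S = S

/-- Irreducibility with respect to Zariski-closed sets. -/
def IsZIrreducible {σ : Type} (S : Set (σ → ℂ)) : Prop :=
  S.Nonempty ∧ ∀ C₁ C₂ : Set (σ → ℂ), IsZClosed C₁ → IsZClosed C₂ →
    S ⊆ C₁ ∪ C₂ → S ⊆ C₁ ∨ S ⊆ C₂

/-- `C` is an irreducible component of `S`. -/
def IsIrredComponentOf {σ : Type} (C S : Set (σ → ℂ)) : Prop :=
  C ⊆ S ∧ IsZClosed C ∧ IsZIrreducible C ∧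
    ∀ C' : Set (σ → ℂ), IsZClosed C' → IsZIrreducible C' → C ⊆ C' → C' ⊆ S → C' = C

/-!
The gradient of `f = x₁x₆ - x₂x₅ + x₃x₄` is the Hodge star `⋆`, a linear involution preserving
`V(f)` and the isotropic quadric. Hence every point of `V(f)` is a multiple of a gradient at a
regular point, which gives `V(f)* = V(f)`; and for `u = s ⋆a ∈ V(f)` the data points `u + ε a`
have the critical points `ε a` tending to `0`, so `(u, 0) ∈ E_f` and `V(f) ⊆ DI(f)`.
Conversely, `f(u) - ⟨∇f(x), u⟩` vanishes on the incidence set; if `x` is isotropic then so is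
`∇f(x)`, so `u - x ∥ ∇f(x)` is orthogonal to `∇f(x)` and `f(u) = ⟨∇f(x), x⟩ = 2 f(x) = 0`.
-/

lemma subset_zclosure {σ : Type} (S : Set (σ → ℂ)) : S ⊆ zclosure S :=
  fun _ hs _ hp => hp _ hs

lemma eval_eq_zero_of_forall_ne_zero {σ : Type} (p : MvPolynomial σ ℂ) (a b : σ → ℂ)
    (h : ∀ ε : ℂ, ε ≠ 0 → eval (ε • a + b) p = 0) : eval b p = 0 := by
  set q : Polynomial ℂ :=
    aeval (fun i => Polynomial.C (a i) * Polynomial.X + Polynomial.C (b i)) p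
  have hq : ∀ ε : ℂ, q.eval ε = eval (ε • a + b) p := by
    intro ε
    rw [← Polynomial.coe_aeval_eq_eval, ← AlgHom.comp_apply, comp_aeval, aeval_eq_eval]
    congr 2
    funext i
    simp only [map_add, map_mul, Polynomial.aeval_C, Polynomial.aeval_X, Pi.add_apply,
      Pi.smul_apply, smul_eq_mul, Algebra.algebraMap_self, RingHom.id_apply, mul_comm]
  have hq0 : q = 0 := by
    refine Polynomial.eq_zero_of_infinite_isRoot q
      (Set.Infinite.mono ?_ (Set.finite_singleton (0 : ℂ)).infinite_compl)
    exact fun ε hε => (hq ε).trans (h ε hε)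
  simpa [hq0] using (hq 0).symm

lemma mem_zclosure_of_punctured_line {σ : Type} {S : Set (σ → ℂ)} (a b : σ → ℂ)
    (h : ∀ ε : ℂ, ε ≠ 0 → ε • a + b ∈ S) : b ∈ zclosure S :=
  fun p hp => eval_eq_zero_of_forall_ne_zero p a b fun ε hε => hp _ (h ε hε)

lemma eval_sumElim_rename_inl {n : ℕ} (u x : Fin n → ℂ) (p : MvPolynomial (Fin n) ℂ) :
    eval (Sum.elim u x) (rename Sum.inl p) = eval u p := by
  rw [eval_rename, Sum.elim_comp_inl]

lemma eval_sumElim_rename_inr {n : ℕ} (u x : Fin n → ℂ) (p : MvPolynomial (Fin n) ℂ) :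
    eval (Sum.elim u x) (rename Sum.inr p) = eval x p := by
  rw [eval_rename, Sum.elim_comp_inr]

lemma sub_mul_grad_comm_of_mem_EDcorr {n : ℕ} {f : MvPolynomial (Fin n) ℂ} {u x : Fin n → ℂ}
    (h : Sum.elim u x ∈ EDcorr f) (i j : Fin n) :
    (u i - x i) * grad f x j = (u j - x j) * grad f x i := by
  let minor : MvPolynomial (Fin n ⊕ Fin n) ℂ :=
    (X (Sum.inl i) - X (Sum.inr i)) * rename Sum.inr (pderiv j f) -
      (X (Sum.inl j) - X (Sum.inr j)) * rename Sum.inr (pderiv i f)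
  have hminor : eval (Sum.elim u x) minor = 0 := by
    refine h minor ?_
    rintro _ ⟨u, x, rfl, -, t, ht⟩
    have hi := congrFun ht i
    have hj := congrFun ht j
    simp only [Pi.sub_apply, Pi.smul_apply, smul_eq_mul, grad] at hi hj
    simp only [minor, map_sub, map_mul, eval_X, Sum.elim_inl, Sum.elim_inr,
      eval_sumElim_rename_inr, hi, hj]
    ring
  simpa only [minor, map_sub, map_mul, eval_X, Sum.elim_inl, Sum.elim_inr,
    eval_sumElim_rename_inr, grad, sub_eq_zero] using hminor

lemma sum_mul_eq_zero_of_sum_sq_eq_zero {ι R : Type*} [Fintype ι] [CommRing R]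
    [NoZeroDivisors R] {v w : ι → R} (hv : ∑ i, v i ^ 2 = 0)
    (hvw : ∀ i j, w i * v j = w j * v i) : ∑ i, v i * w i = 0 := by
  by_cases hv0 : v = 0
  · simp [hv0]
  obtain ⟨j, hj⟩ := Function.ne_iff.mp hv0
  refine (mul_eq_zero.mp ?_).resolve_right hj
  calc (∑ i, v i * w i) * v j = ∑ i, v i * (w i * v j) := by
        rw [Finset.sum_mul]; exact Finset.sum_congr rfl fun i _ => by ring
    _ = w j * ∑ i, v i ^ 2 := by
        rw [Finset.mul_sum]; exact Finset.sum_congr rfl fun i _ => by rw [hvw]; ring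
    _ = 0 := by rw [hv, mul_zero]

lemma sum_grad_mul_sub_eq_zero_of_mem_EDcorr {n : ℕ} {f : MvPolynomial (Fin n) ℂ}
    {u x : Fin n → ℂ} (h : Sum.elim u x ∈ EDcorr f) (hiso : grad f x ∈ isoQ n) :
    ∑ i, grad f x i * (u i - x i) = 0 :=
  sum_mul_eq_zero_of_sum_sq_eq_zero hiso (sub_mul_grad_comm_of_mem_EDcorr h)

noncomputable def tangentDefect {n : ℕ} (f : MvPolynomial (Fin n) ℂ) :
    MvPolynomial (Fin n ⊕ Fin n) ℂ :=
  rename Sum.inl f - ∑ i, rename Sum.inr (pderiv i f) * X (Sum.inl i)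

lemma eval_sumElim_tangentDefect {n : ℕ} (f : MvPolynomial (Fin n) ℂ) (u x : Fin n → ℂ) :
    eval (Sum.elim u x) (tangentDefect f) = eval u f - ∑ i, grad f x i * u i := by
  simp only [tangentDefect, map_sub, map_sum, map_mul, eval_X, Sum.elim_inl,
    eval_sumElim_rename_inl, eval_sumElim_rename_inr, grad]

noncomputable def plucker : MvPolynomial (Fin 6) ℂ := X 0 * X 5 - X 1 * X 4 + X 2 * X 3

def hodge (x : Fin 6 → ℂ) : Fin 6 → ℂ := ![x 5, -x 4, x 3, x 2, -x 1, x 0]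

lemma eval_plucker (x : Fin 6 → ℂ) : eval x plucker = x 0 * x 5 - x 1 * x 4 + x 2 * x 3 := by
  simp [plucker]

lemma grad_plucker : grad plucker = hodge := by
  funext x i
  fin_cases i <;> simp [grad, plucker, hodge, pderiv_X]

lemma hodge_hodge (x : Fin 6 → ℂ) : hodge (hodge x) = x := by
  funext i; fin_cases i <;> simp [hodge]

lemma hodge_smul (c : ℂ) (x : Fin 6 → ℂ) : hodge (c • x) = c • hodge x := by
  funext i; fin_cases i <;> simp [hodge]

lemma eval_plucker_hodge (x : Fin 6 → ℂ) : eval (hodge x) plucker = eval x plucker := by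
  simp only [eval_plucker, hodge, Matrix.cons_val_zero, Matrix.cons_val_one, Matrix.cons_val]
  ring

lemma eval_plucker_smul (c : ℂ) (x : Fin 6 → ℂ) :
    eval (c • x) plucker = c ^ 2 * eval x plucker := by
  simp only [eval_plucker, Pi.smul_apply, smul_eq_mul]
  ring

lemma hodge_mem_isoQ_iff {x : Fin 6 → ℂ} : hodge x ∈ isoQ 6 ↔ x ∈ isoQ 6 := by
  change ∑ i, hodge x i ^ 2 = 0 ↔ ∑ i, x i ^ 2 = 0
  simp only [Fin.sum_univ_six, hodge, Matrix.cons_val_zero, Matrix.cons_val_one, Matrix.cons_val]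
  constructor <;> intro h <;> linear_combination h

lemma sum_hodge_mul_self (x : Fin 6 → ℂ) : ∑ i, hodge x i * x i = 2 * eval x plucker := by
  simp only [eval_plucker, Fin.sum_univ_six, hodge, Matrix.cons_val_zero, Matrix.cons_val_one,
    Matrix.cons_val]
  ring

lemma exists_regular_smul_grad_of_mem_Vp {y : Fin 6 → ℂ} (hy : y ∈ Vp plucker) :
    ∃ a ∈ RegL plucker, ∃ s : ℂ, y = s • grad plucker a := by
  by_cases hy0 : y = 0
  · refine ⟨Pi.single 0 1, ⟨by simp [eval_plucker], ?_⟩, 0, by rw [hy0, zero_smul]⟩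
    rw [grad_plucker, Ne, funext_iff, not_forall]
    exact ⟨5, by simp [hodge]⟩
  · refine ⟨hodge y, ⟨(eval_plucker_hodge y).trans hy, ?_⟩, 1, ?_⟩
    · rwa [grad_plucker, hodge_hodge]
    · rw [grad_plucker, hodge_hodge, one_smul]

lemma eval_plucker_eq_sum_grad_mul_of_mem_EDcorr {u x : Fin 6 → ℂ}
    (h : Sum.elim u x ∈ EDcorr plucker) : eval u plucker = ∑ i, grad plucker x i * u i := by
  rw [← sub_eq_zero, ← eval_sumElim_tangentDefect]
  refine h _ ?_
  rintro _ ⟨u, x, rfl, ⟨hx, -⟩, t, ht⟩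
  obtain rfl : u = x + t • hodge x := by rw [← grad_plucker, ← ht, add_sub_cancel]
  rw [eval_sumElim_tangentDefect, grad_plucker]
  rw [eval_plucker] at hx ⊢
  simp only [Fin.sum_univ_six, hodge, Pi.add_apply, Pi.smul_apply, smul_eq_mul,
    Matrix.cons_val_zero, Matrix.cons_val_one, Matrix.cons_val]
  linear_combination (t ^ 2 - 1) * hx

lemma DI_plucker_subset_Vp : DI plucker ⊆ Vp plucker := by
  rintro u ⟨x, hE, hQ, hx⟩
  have horth := sum_grad_mul_sub_eq_zero_of_mem_EDcorr hE
    (by rwa [grad_plucker, hodge_mem_isoQ_iff])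
  simp only [mul_sub, Finset.sum_sub_distrib, sub_eq_zero] at horth
  change eval u plucker = 0
  rw [eval_plucker_eq_sum_grad_mul_of_mem_EDcorr hE, horth, grad_plucker, sum_hodge_mul_self,
    hx, mul_zero]

lemma sumElim_zero_mem_EDcorr_plucker {u : Fin 6 → ℂ} (hu : u ∈ Vp plucker) :
    Sum.elim u 0 ∈ EDcorr plucker := by
  obtain ⟨a, ⟨ha, hga⟩, s, rfl⟩ := exists_regular_smul_grad_of_mem_Vp hu
  rw [grad_plucker] at hga ⊢
  refine mem_zclosure_of_punctured_line (Sum.elim a a) _ fun ε hε =>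
    ⟨s • hodge a + ε • a, ε • a, ?_, ⟨?_, ?_⟩, s / ε, ?_⟩
  · funext k
    cases k <;> simp [add_comm]
  · exact (eval_plucker_smul ε a).trans (by rw [ha, mul_zero])
  · rw [grad_plucker, hodge_smul]
    exact smul_ne_zero hε hga
  · rw [add_sub_cancel_right, grad_plucker, hodge_smul, smul_smul, div_mul_cancel₀ s hε]

lemma Vp_subset_DI_plucker : Vp plucker ⊆ DI plucker := fun _ hu =>
  ⟨0, sumElim_zero_mem_EDcorr_plucker hu, by simp [isoQ], by simp [Vp, eval_plucker]⟩

lemma dualV_plucker : dualV plucker = Vp plucker := by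
  refine subset_antisymm ?_ ?_
  · intro y hy
    refine hy plucker ?_
    rintro _ ⟨t, x, ⟨hx, -⟩, rfl⟩
    rw [grad_plucker, eval_plucker_smul, eval_plucker_hodge, hx, mul_zero]
  · intro y hy
    obtain ⟨a, ha, s, rfl⟩ := exists_regular_smul_grad_of_mem_Vp hy
    exact subset_zclosure _ ⟨s, a, ha, rfl⟩

/-- For the affine cone over the Grassmannian of planes in 4-space,
`f = x₁x₆ - x₂x₅ + x₃x₄`, the ED data isotropic locus equals the variety itself;
in particular it equals the dual variety. -/
theorem DI_grassmannian :
    DI (X 0 * X 5 - X 1 * X 4 + X 2 * X 3 : MvPolynomial (Fin 6) ℂ) =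
      Vp (X 0 * X 5 - X 1 * X 4 + X 2 * X 3 : MvPolynomial (Fin 6) ℂ) ∧
    DI (X 0 * X 5 - X 1 * X 4 + X 2 * X 3 : MvPolynomial (Fin 6) ℂ) =
      dualV (X 0 * X 5 - X 1 * X 4 + X 2 * X 3 : MvPolynomial (Fin 6) ℂ) := by
  have h : DI plucker = Vp plucker := subset_antisymm DI_plucker_subset_Vp Vp_subset_DI_plucker
  exact ⟨h, h.trans dualV_plucker.symm⟩
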